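/- For every integer K ≥ 1 and every integer 1 ≤ k ≤ K, the k-order network distance d_D^k restricted to K-order dissimilarity networks is a metric on the space of K-order dissimilarity networks modulo k-isomorphism: it is nonnegative, symmetric, satisfies the triangle inequality, and d_D^k(D_X,D_Y) = 0 holds if and only if D_X and D_Y are k-isomorphic. -/

import Mathlib

open scoped ENNReal

/-- A correspondence between node sets `X` and `Y`: a set of pairs in which every
`x : X` and every `y : Y` appears. -/
def IsCorrespondence {X Y : Type} (C : Set (X × Y)) : Prop :=
  (∀ x : X, ∃ y : Y, (x, y) ∈ C) ∧ (∀ y : Y, ∃ x : X, (x, y) ∈ C)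

/-- The rank of a tuple: the number of distinct elements appearing in it. -/
noncomputable def tupleRank {X : Type} {n : ℕ} (t : Fin n → X) : ℕ :=
  Set.ncard (Set.range t)

/-- A `K`-order network on a finite nonempty node set `X`: relationship functions
`r k : X^{k+1} → [0,1]` for `0 ≤ k ≤ K`, symmetric under permutations of the arguments,
and such that any subtuple with the same set of distinct elements as the full tuple
carries the same relationship value. -/
structure HONetwork (K : ℕ) (X : Type) [Fintype X] [Nonempty X] : Type where
  r : ∀ k : ℕ, (Fin (k + 1) → X) → ℝ
  r_nonneg : ∀ k, k ≤ K → ∀ t : Fin (k + 1) → X, 0 ≤ r k t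
  r_le_one : ∀ k, k ≤ K → ∀ t : Fin (k + 1) → X, r k t ≤ 1
  symm : ∀ k, k ≤ K → ∀ (t : Fin (k + 1) → X) (σ : Equiv.Perm (Fin (k + 1))),
    r k (t ∘ σ) = r k t
  identity : ∀ k, k ≤ K → ∀ k', k' ≤ K → ∀ (t : Fin (k + 1) → X)
    (ι : Fin (k' + 1) → Fin (k + 1)), StrictMono ι →
    Set.range (t ∘ ι) = Set.range t → r k' (t ∘ ι) = r k t

/-- The `k`-order network difference `Γ^k_{X,Y}(C)`: the largest value of
`|r_X^k(x_{0:k}) − r_Y^k(y_{0:k})|` over tuples of pairs of correspondents in `C`. -/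
noncomputable def Gamma {K : ℕ} {X Y : Type} [Fintype X] [Nonempty X] [Fintype Y] [Nonempty Y]
    (NX : HONetwork K X) (NY : HONetwork K Y) (k : ℕ) (C : Set (X × Y)) : ℝ :=
  sSup { v : ℝ | ∃ (tx : Fin (k + 1) → X) (ty : Fin (k + 1) → Y),
    (∀ i, (tx i, ty i) ∈ C) ∧ v = |NX.r k tx - NY.r k ty| }

/-- The `k`-order network distance: minimum of `Γ^k_{X,Y}(C)` over correspondences `C`. -/
noncomputable def dN {K : ℕ} {X Y : Type} [Fintype X] [Nonempty X] [Fintype Y] [Nonempty Y]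
    (k : ℕ) (NX : HONetwork K X) (NY : HONetwork K Y) : ℝ :=
  sInf { v : ℝ | ∃ C : Set (X × Y), IsCorrespondence C ∧ v = Gamma NX NY k C }

/-- The `p`-norm of a vector in `ℝ^{K+1}`, `1 ≤ p ≤ ∞`. -/
noncomputable def pNorm (K : ℕ) (p : ℝ≥0∞) [Fact (1 ≤ p)] (v : Fin (K + 1) → ℝ) : ℝ :=
  ‖(WithLp.equiv p (Fin (K + 1) → ℝ)).symm v‖

/-- The `p`-norm network distance: minimum over correspondences `C` of the `p`-norm of the
vector `(Γ^0_{X,Y}(C), …, Γ^K_{X,Y}(C))`. -/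
noncomputable def dNp {K : ℕ} {X Y : Type} [Fintype X] [Nonempty X] [Fintype Y] [Nonempty Y]
    (p : ℝ≥0∞) [Fact (1 ≤ p)] (NX : HONetwork K X) (NY : HONetwork K Y) : ℝ :=
  sInf { v : ℝ | ∃ C : Set (X × Y), IsCorrespondence C ∧
    v = pNorm K p (fun k : Fin (K + 1) => Gamma NX NY (k : ℕ) C) }

/-- Two `K`-order networks are `k`-isomorphic if a bijection of the node sets preserves the
`k`-order relationship functions. -/
def kIsomorphic {K : ℕ} {X Y : Type} [Fintype X] [Nonempty X] [Fintype Y] [Nonempty Y]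
    (k : ℕ) (NX : HONetwork K X) (NY : HONetwork K Y) : Prop :=
  ∃ φ : X ≃ Y, ∀ t : Fin (k + 1) → X, NY.r k (fun i => φ (t i)) = NX.r k t

/-- Two `K`-order networks are isomorphic if a bijection of the node sets preserves the
`k`-order relationship functions for all `0 ≤ k ≤ K`. -/
def Isomorphic {K : ℕ} {X Y : Type} [Fintype X] [Nonempty X] [Fintype Y] [Nonempty Y]
    (NX : HONetwork K X) (NY : HONetwork K Y) : Prop :=
  ∃ φ : X ≃ Y, ∀ k, k ≤ K → ∀ t : Fin (k + 1) → X, NY.r k (fun i => φ (t i)) = NX.r k t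

/-- A `K`-order dissimilarity network: a `K`-order network whose relationship functions
decompose as `r^k = d^k + ε · rank`, with nonnegative dissimilarity functions `d^k`
satisfying the order increasing property, and `0 < ε ≤ 1 − (1/K) · max d^K`. -/
structure DissimNetwork (K : ℕ) (X : Type) [Fintype X] [Nonempty X]
    extends HONetwork K X where
  dfun : ∀ k : ℕ, (Fin (k + 1) → X) → ℝ
  eps : ℝ
  dfun_nonneg : ∀ k, k ≤ K → ∀ t : Fin (k + 1) → X, 0 ≤ dfun k t
  decomp : ∀ k, k ≤ K → ∀ t : Fin (k + 1) → X,
    r k t = dfun k t + eps * (tupleRank t : ℝ)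
  order_incr : ∀ k : ℕ, k + 1 ≤ K → ∀ t : Fin (k + 2) → X,
    dfun k (fun i : Fin (k + 1) => t i.castSucc) ≤ dfun (k + 1) t
  eps_pos : 0 < eps
  eps_le : ∀ t : Fin (K + 1) → X, eps ≤ 1 - (1 / (K : ℝ)) * dfun K t

/-- A `K`-order proximity network: a `K`-order network whose relationship functions
decompose as `r^k = p^k − ε · rank`, with nonnegative proximity functions `p^k`
satisfying the order decreasing property, and `0 < ε ≤ (1/K) · min p^K`. -/
structure ProxNetwork (K : ℕ) (X : Type) [Fintype X] [Nonempty X]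
    extends HONetwork K X where
  pfun : ∀ k : ℕ, (Fin (k + 1) → X) → ℝ
  eps : ℝ
  pfun_nonneg : ∀ k, k ≤ K → ∀ t : Fin (k + 1) → X, 0 ≤ pfun k t
  decomp : ∀ k, k ≤ K → ∀ t : Fin (k + 1) → X,
    r k t = pfun k t - eps * (tupleRank t : ℝ)
  order_decr : ∀ k : ℕ, k + 1 ≤ K → ∀ t : Fin (k + 2) → X,
    pfun (k + 1) t ≤ pfun k (fun i : Fin (k + 1) => t i.castSucc)
  eps_pos : 0 < eps
  eps_le : ∀ t : Fin (K + 1) → X, eps ≤ (1 / (K : ℝ)) * pfun K t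

/-! Symmetry and the triangle inequality hold for arbitrary networks: invert an optimal
correspondence, or compose two optimal ones and use the triangle inequality for `|·|`
pointwise. The graph of a `k`-isomorphism has network difference zero. Conversely, if
`d^k = 0`, an optimal correspondence `C` preserves `r^k` exactly. In a dissimilarity network
and for `1 ≤ k`, identity and the rank term give, for `x ≠ x'`,
`r^k(x, x', …, x') = r^1(x, x') = d^1(x, x') + 2ε ≥ d^0(x) + 2ε > d^0(x) + ε = r^k(x, …, x)`,
so no node can be related by `C` to two distinct nodes. Hence `C` is the graph of a bijection,
which is a `k`-isomorphism. -/

namespace HONetwork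

variable {K : ℕ} {X : Type} [Fintype X] [Nonempty X] (N : HONetwork K X)

theorem r_const {k : ℕ} (hk : k ≤ K) (x : X) : N.r k (fun _ => x) = N.r 0 (fun _ => x) :=
  (N.identity k hk 0 K.zero_le (fun _ => x) (fun _ => 0)
    (Subsingleton.strictMono (α := Fin 1) _)
    (by simp only [Function.comp_def, Set.range_const])).symm

theorem r_cons_const {k : ℕ} (hk1 : 1 ≤ k) (hk : k ≤ K) (x x' : X) :
    N.r k (Fin.cons x fun _ => x') = N.r 1 ![x, x'] := by
  have : NeZero k := ⟨by omega⟩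
  have hcomp :
      (Fin.cons x fun _ => x' : Fin (k + 1) → X) ∘ Fin.castLE (by omega) = ![x, x'] := by
    funext j
    fin_cases j <;> rfl
  have h := N.identity k hk 1 (hk1.trans hk) (Fin.cons x fun _ => x') (Fin.castLE (by omega))
    (Fin.strictMono_castLE _) (by simp [hcomp, Fin.range_cons, Set.pair_comm])
  rw [← h, hcomp]

def SeparatesPoints (k : ℕ) : Prop :=
  ∀ x x' : X, N.r k (Fin.cons x fun _ => x') = N.r k (fun _ => x) → x = x'

end HONetwork

theorem tupleRank_const {X : Type} {n : ℕ} [NeZero n] (x : X) :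
    tupleRank (fun _ : Fin n => x) = 1 := by
  simp [tupleRank]

theorem tupleRank_pair {X : Type} {x x' : X} (h : x ≠ x') : tupleRank ![x, x'] = 2 := by
  simp [tupleRank, Set.ncard_pair h.symm]

namespace DissimNetwork

variable {K : ℕ} {X : Type} [Fintype X] [Nonempty X] (D : DissimNetwork K X)

theorem decomp_const {k : ℕ} (hk : k ≤ K) (x : X) :
    D.r k (fun _ => x) = D.dfun 0 (fun _ => x) + D.eps := by
  rw [D.toHONetwork.r_const hk, D.decomp 0 K.zero_le, tupleRank_const, Nat.cast_one, mul_one]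

theorem decomp_pair (hK : 1 ≤ K) {x x' : X} (h : x ≠ x') :
    D.r 1 ![x, x'] = D.dfun 1 ![x, x'] + 2 * D.eps := by
  rw [D.decomp 1 hK, tupleRank_pair h, Nat.cast_two, mul_comm]

theorem r_const_lt_r_cons_const {k : ℕ} (hk1 : 1 ≤ k) (hk : k ≤ K) {x x' : X} (h : x ≠ x') :
    D.r k (fun _ => x) < D.r k (Fin.cons x fun _ => x') := by
  have hmono : D.dfun 0 (fun _ => x) ≤ D.dfun 1 ![x, x'] := by
    convert D.order_incr 0 (hk1.trans hk) ![x, x'] using 2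
    funext i
    fin_cases i
    rfl
  rw [D.toHONetwork.r_cons_const hk1 hk, D.decomp_const hk, D.decomp_pair (hk1.trans hk) h]
  linarith [D.eps_pos]

theorem separatesPoints {k : ℕ} (hk1 : 1 ≤ k) (hk : k ≤ K) : D.SeparatesPoints k :=
  fun _ _ h => by_contra fun hne => (D.r_const_lt_r_cons_const hk1 hk hne).ne' h

end DissimNetwork

open SetRel

theorem IsCorrespondence.inv {X Y : Type} {C : SetRel X Y} (hC : IsCorrespondence C) :
    IsCorrespondence C.inv :=
  ⟨hC.2, hC.1⟩

theorem IsCorrespondence.comp {X Y Z : Type} {C₁ : SetRel X Z} {C₂ : SetRel Z Y}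
    (h₁ : IsCorrespondence C₁) (h₂ : IsCorrespondence C₂) : IsCorrespondence (C₁ ○ C₂) := by
  refine ⟨fun x => ?_, fun y => ?_⟩
  · obtain ⟨z, hxz⟩ := h₁.1 x
    obtain ⟨y, hzy⟩ := h₂.1 z
    exact ⟨y, z, hxz, hzy⟩
  · obtain ⟨z, hzy⟩ := h₂.2 y
    obtain ⟨x, hxz⟩ := h₁.2 z
    exact ⟨x, z, hxz, hzy⟩

theorem isCorrespondence_univ {X Y : Type} [Nonempty X] [Nonempty Y] :
    IsCorrespondence (Set.univ : SetRel X Y) :=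
  ⟨fun _ => ⟨Classical.arbitrary Y, trivial⟩, fun _ => ⟨Classical.arbitrary X, trivial⟩⟩

theorem isCorrespondence_graph {X Y : Type} (φ : X ≃ Y) : IsCorrespondence (Function.graph φ) :=
  ⟨fun x => ⟨φ x, rfl⟩, fun y => ⟨φ.symm y, φ.apply_symm_apply y⟩⟩

theorem IsCorrespondence.exists_equiv {X Y : Type} {C : SetRel X Y} (hC : IsCorrespondence C)
    (hfun : ∀ x y y', (x, y) ∈ C → (x, y') ∈ C → y = y')
    (hinj : ∀ y x x', (y, x) ∈ C.inv → (y, x') ∈ C.inv → x = x') :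
    ∃ φ : X ≃ Y, ∀ x, (x, φ x) ∈ C := by
  choose f hf using hC.1
  have hbij : Function.Bijective f := by
    refine ⟨fun x x' hxx' => hinj (f x) x x' (hf x) (hxx' ▸ hf x'), fun y => ?_⟩
    obtain ⟨x, hxy⟩ := hC.2 y
    exact ⟨x, hfun x _ _ (hf x) hxy⟩
  exact ⟨Equiv.ofBijective f hbij, hf⟩

section Distance

variable {K k : ℕ} {X Y Z : Type} [Fintype X] [Nonempty X] [Fintype Y] [Nonempty Y]
  [Fintype Z] [Nonempty Z] {NX : HONetwork K X} {NY : HONetwork K Y} {NZ : HONetwork K Z}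
  {C : SetRel X Y}

theorem Gamma_nonneg : 0 ≤ Gamma NX NY k C :=
  Real.sSup_nonneg <| by
    rintro v ⟨tx, ty, -, rfl⟩
    exact abs_nonneg _

theorem abs_sub_le_Gamma {tx : Fin (k + 1) → X} {ty : Fin (k + 1) → Y}
    (h : ∀ i, (tx i, ty i) ∈ C) : |NX.r k tx - NY.r k ty| ≤ Gamma NX NY k C := by
  refine le_csSup ?_ ⟨tx, ty, h, rfl⟩
  refine (Set.finite_range fun t : (Fin (k + 1) → X) × (Fin (k + 1) → Y) =>
    |NX.r k t.1 - NY.r k t.2|).subset ?_ |>.bddAbove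
  rintro v ⟨tx, ty, -, rfl⟩
  exact ⟨(tx, ty), rfl⟩

theorem Gamma_le {a : ℝ} (ha : 0 ≤ a)
    (h : ∀ (tx : Fin (k + 1) → X) (ty : Fin (k + 1) → Y),
      (∀ i, (tx i, ty i) ∈ C) → |NX.r k tx - NY.r k ty| ≤ a) :
    Gamma NX NY k C ≤ a :=
  Real.sSup_le (by rintro v ⟨tx, ty, hC, rfl⟩; exact h tx ty hC) ha

theorem r_eq_of_Gamma_eq_zero (hC : Gamma NX NY k C = 0) {tx : Fin (k + 1) → X}
    {ty : Fin (k + 1) → Y} (h : ∀ i, (tx i, ty i) ∈ C) : NX.r k tx = NY.r k ty := by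
  have := abs_sub_le_Gamma (NX := NX) (NY := NY) h
  rw [hC] at this
  exact sub_eq_zero.mp (abs_nonpos_iff.mp this)

theorem Gamma_inv_le : Gamma NY NX k C.inv ≤ Gamma NX NY k C :=
  Gamma_le Gamma_nonneg fun _ _ h => (abs_sub_comm _ _).trans_le (abs_sub_le_Gamma h)

theorem Gamma_inv : Gamma NY NX k C.inv = Gamma NX NY k C :=
  le_antisymm Gamma_inv_le (Gamma_inv_le (C := C.inv))

theorem Gamma_comp_le {C₁ : SetRel X Z} {C₂ : SetRel Z Y} :
    Gamma NX NY k (C₁ ○ C₂) ≤ Gamma NX NZ k C₁ + Gamma NZ NY k C₂ := by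
  refine Gamma_le (add_nonneg Gamma_nonneg Gamma_nonneg) fun tx ty h => ?_
  choose tz h₁ h₂ using h
  calc |NX.r k tx - NY.r k ty|
      ≤ |NX.r k tx - NZ.r k tz| + |NZ.r k tz - NY.r k ty| := abs_sub_le _ _ _
    _ ≤ Gamma NX NZ k C₁ + Gamma NZ NY k C₂ :=
      add_le_add (abs_sub_le_Gamma h₁) (abs_sub_le_Gamma h₂)

theorem Gamma_graph_of_kIsomorphic {φ : X ≃ Y}
    (hφ : ∀ t : Fin (k + 1) → X, NY.r k (fun i => φ (t i)) = NX.r k t) :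
    Gamma NX NY k (Function.graph φ) = 0 := by
  refine le_antisymm (Gamma_le le_rfl fun tx ty h => ?_) Gamma_nonneg
  obtain rfl : (fun i => φ (tx i)) = ty := funext h
  rw [hφ, sub_self, abs_zero]

theorem eq_of_mem_of_Gamma_eq_zero (hY : NY.SeparatesPoints k) (hC : Gamma NX NY k C = 0)
    {x : X} {y y' : Y} (hy : (x, y) ∈ C) (hy' : (x, y') ∈ C) : y = y' := by
  refine hY y y' ?_
  calc NY.r k (Fin.cons y fun _ => y') = NX.r k (fun _ => x) :=
        (r_eq_of_Gamma_eq_zero hC fun i => Fin.cases hy (fun _ => hy') i).symm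
    _ = NY.r k (fun _ => y) := r_eq_of_Gamma_eq_zero hC fun _ => hy

variable (k NX NY)

theorem dN_le_Gamma (hC : IsCorrespondence C) : dN k NX NY ≤ Gamma NX NY k C := by
  refine csInf_le ?_ ⟨C, hC, rfl⟩
  exact ⟨0, by rintro v ⟨C, -, rfl⟩; exact Gamma_nonneg⟩

theorem exists_dN_eq_Gamma :
    ∃ C : SetRel X Y, IsCorrespondence C ∧ dN k NX NY = Gamma NX NY k C := by
  have hne : { v : ℝ | ∃ C : SetRel X Y, IsCorrespondence C ∧ v = Gamma NX NY k C }.Nonempty :=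
    ⟨_, .univ, isCorrespondence_univ, rfl⟩
  refine hne.csInf_mem <| (Set.finite_range fun C : SetRel X Y => Gamma NX NY k C).subset ?_
  rintro v ⟨C, -, rfl⟩
  exact ⟨C, rfl⟩

theorem dN_nonneg : 0 ≤ dN k NX NY := by
  obtain ⟨C, -, hC⟩ := exists_dN_eq_Gamma k NX NY
  exact hC ▸ Gamma_nonneg

theorem dN_swap_le : dN k NY NX ≤ dN k NX NY := by
  obtain ⟨C, hC, hdN⟩ := exists_dN_eq_Gamma k NX NY
  calc dN k NY NX ≤ Gamma NY NX k C.inv := dN_le_Gamma k NY NX hC.inv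
    _ = dN k NX NY := by rw [Gamma_inv, hdN]

theorem dN_comm : dN k NX NY = dN k NY NX :=
  le_antisymm (dN_swap_le k NY NX) (dN_swap_le k NX NY)

theorem dN_triangle : dN k NX NY ≤ dN k NX NZ + dN k NZ NY := by
  obtain ⟨C₁, hC₁, h₁⟩ := exists_dN_eq_Gamma k NX NZ
  obtain ⟨C₂, hC₂, h₂⟩ := exists_dN_eq_Gamma k NZ NY
  calc dN k NX NY ≤ Gamma NX NY k (C₁ ○ C₂) := dN_le_Gamma k NX NY (hC₁.comp hC₂)
    _ ≤ dN k NX NZ + dN k NZ NY := h₁ ▸ h₂ ▸ Gamma_comp_le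

theorem dN_eq_zero_of_kIsomorphic (h : kIsomorphic k NX NY) : dN k NX NY = 0 := by
  obtain ⟨φ, hφ⟩ := h
  refine le_antisymm ?_ (dN_nonneg k NX NY)
  calc dN k NX NY ≤ Gamma NX NY k (Function.graph φ) :=
        dN_le_Gamma k NX NY (isCorrespondence_graph φ)
    _ = 0 := Gamma_graph_of_kIsomorphic hφ

theorem kIsomorphic_of_dN_eq_zero (hX : NX.SeparatesPoints k) (hY : NY.SeparatesPoints k)
    (h : dN k NX NY = 0) : kIsomorphic k NX NY := by
  obtain ⟨C, hC, hdN⟩ := exists_dN_eq_Gamma k NX NY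
  have hΓ : Gamma NX NY k C = 0 := hdN ▸ h
  obtain ⟨φ, hφ⟩ := hC.exists_equiv (fun _ _ _ => eq_of_mem_of_Gamma_eq_zero hY hΓ)
    (fun _ _ _ => eq_of_mem_of_Gamma_eq_zero hX (Gamma_inv.trans hΓ))
  exact ⟨φ, fun t => (r_eq_of_Gamma_eq_zero hΓ fun i => hφ (t i)).symm⟩

end Distance

theorem dD_metric_general (K k : ℕ) (hk1 : 1 ≤ k) (hk : k ≤ K)
    (X Y Z : Type) [Fintype X] [Nonempty X] [Fintype Y] [Nonempty Y] [Fintype Z] [Nonempty Z]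
    (DX : DissimNetwork K X) (DY : DissimNetwork K Y) (DZ : DissimNetwork K Z) :
    0 ≤ dN k DX.toHONetwork DY.toHONetwork ∧
    dN k DX.toHONetwork DY.toHONetwork = dN k DY.toHONetwork DX.toHONetwork ∧
    dN k DX.toHONetwork DY.toHONetwork ≤
      dN k DX.toHONetwork DZ.toHONetwork + dN k DZ.toHONetwork DY.toHONetwork ∧
    (dN k DX.toHONetwork DY.toHONetwork = 0 ↔
      kIsomorphic k DX.toHONetwork DY.toHONetwork) :=
  ⟨dN_nonneg k _ _, dN_comm k _ _, dN_triangle k _ _,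
    kIsomorphic_of_dN_eq_zero k _ _ (DX.separatesPoints hk1 hk) (DY.separatesPoints hk1 hk),
    dN_eq_zero_of_kIsomorphic k _ _⟩

/-- for `K ≥ 1` and `1 ≤ k ≤ K`, the `k`-order network distance restricted to
`K`-order dissimilarity networks is a metric modulo `k`-isomorphism. -/
theorem dD_metric (K k : ℕ) (hK : 1 ≤ K) (hk1 : 1 ≤ k) (hk : k ≤ K)
    (X Y Z : Type) [Fintype X] [Nonempty X] [Fintype Y] [Nonempty Y] [Fintype Z] [Nonempty Z]
    (DX : DissimNetwork K X) (DY : DissimNetwork K Y) (DZ : DissimNetwork K Z) :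
    0 ≤ dN k DX.toHONetwork DY.toHONetwork ∧
    dN k DX.toHONetwork DY.toHONetwork = dN k DY.toHONetwork DX.toHONetwork ∧
    dN k DX.toHONetwork DY.toHONetwork ≤
      dN k DX.toHONetwork DZ.toHONetwork + dN k DZ.toHONetwork DY.toHONetwork ∧
    (dN k DX.toHONetwork DY.toHONetwork = 0 ↔
      kIsomorphic k DX.toHONetwork DY.toHONetwork) :=
  dD_metric_general K k hk1 hk X Y Z DX DY DZ
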